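/- The polynomial p(x,y) = x^3 + 3xy + y^3 satisfies p(x,y) = 1 whenever x + y = 1, has nonnegative coefficients, exactly 3 nonzero monomials, and degree 3 = 2·3 − 3; moreover it is, up to swapping variables, the unique polynomial of degree 3 with nonnegative coefficients, 3 nonzero terms, and p ≡ 1 on x + y = 1. -/

import Mathlib

/-!
On the line `x + y = 1`, `x³ + y³ + 3xy = (x + y)³ - 3xy(x + y - 1) = 1`.

Conversely, `q(x, 1 - x) = 1` for a cubic `q = ∑ cᵢⱼ xⁱ yʲ` amounts to four linear relations
between the `cᵢⱼ`. Together with `cᵢⱼ ≥ 0` and the presence of a cubic term they force `q` to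
contain a term in `x` alone, a term in `y` alone and a mixed term. As `q` has only three terms, it
has exactly one of each kind; the relations then exclude `x²y` and `xy²` as the mixed term, and
with `xy` they force the pure terms to be `x³` and `y³`, with coefficients `1, 3, 1`.
-/

open MvPolynomial

noncomputable def p18 : MvPolynomial (Fin 2) ℝ :=
  X 0 ^ 3 + 3 * X 0 * X 1 + X 1 ^ 3

open Finset

theorem Finset.injOn_of_subset_image_of_card_le {α β : Type*} [DecidableEq β] {s : Finset α}
    {t : Finset β} {f : α → β} (ht : t ⊆ s.image f) (hst : #s ≤ #t) : Set.InjOn f s :=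
  card_image_iff.mp (le_antisymm card_image_le (hst.trans (card_le_card ht)))

noncomputable def xyExp (i j : ℕ) : Fin 2 →₀ ℕ := Finsupp.single 0 i + Finsupp.single 1 j

@[simp] lemma xyExp_apply_zero (i j : ℕ) : xyExp i j 0 = i := by simp [xyExp]

@[simp] lemma xyExp_apply_one (i j : ℕ) : xyExp i j 1 = j := by simp [xyExp]

lemma xyExp_apply_zero_apply_one (m : Fin 2 →₀ ℕ) : xyExp (m 0) (m 1) = m := by
  ext a; fin_cases a <;> simp

@[simp] lemma xyExp_inj {i j k l : ℕ} : xyExp i j = xyExp k l ↔ i = k ∧ j = l :=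
  ⟨fun h => ⟨by simpa using congr($h 0), by simpa using congr($h 1)⟩, by rintro ⟨rfl, rfl⟩; rfl⟩

@[simp] lemma support_xyExp (i j : ℕ) :
    (xyExp i j).support = (if i = 0 then ∅ else {0}) ∪ (if j = 0 then ∅ else {1}) := by
  ext a; fin_cases a <;> split_ifs <;> simp_all

@[simp] lemma degree_xyExp (i j : ℕ) : (xyExp i j).degree = i + j := by simp [xyExp]

lemma eval_eq_sum_coeff_xyExp {R : Type*} [CommSemiring R] {n : ℕ} (q : MvPolynomial (Fin 2) R)
    (hq : q.totalDegree < n) (x y : R) :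
    eval ![x, y] q = ∑ i ∈ range n, ∑ j ∈ range n, q.coeff (xyExp i j) * x ^ i * y ^ j := by
  have hsub : q.support ⊆ (range n ×ˢ range n).image fun p => xyExp p.1 p.2 := by
    intro m hm
    have := le_totalDegree hm
    rw [Finsupp.sum_fintype _ _ (fun _ => rfl), Fin.sum_univ_two] at this
    exact mem_image.2 ⟨(m 0, m 1), by simp; omega, xyExp_apply_zero_apply_one m⟩
  rw [eval_eq', sum_subset hsub, sum_image, sum_product]
  · simp [Fin.prod_univ_two, mul_assoc]
  · intro p _ p' _ h; simpa [Prod.ext_iff] using h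
  · intro m _ hm; simp [notMem_support_iff.mp hm]

lemma coeff_xyExp_eq_zero_of_totalDegree_lt {R : Type*} [CommSemiring R]
    {q : MvPolynomial (Fin 2) R} {i j : ℕ} (h : q.totalDegree < i + j) :
    q.coeff (xyExp i j) = 0 :=
  coeff_eq_zero_of_totalDegree_lt (by rwa [← Finsupp.degree_apply, degree_xyExp])

/-- The first two relations are `q(1, 0) = 1` and `q(0, 1) = 1`; the last two are the sum and
the difference of the coefficients of `x²y` and `xy²` in the homogenized identity
`∑ cᵢⱼ xⁱ yʲ (x + y)^(3 - i - j) = (x + y)³`. -/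
lemma coeff_relations_of_eval_eq_one {q : MvPolynomial (Fin 2) ℝ} (hq : q.totalDegree ≤ 3)
    (he : ∀ x y : ℝ, x + y = 1 → eval ![x, y] q = 1) :
    q.coeff (xyExp 0 0) + q.coeff (xyExp 1 0) + q.coeff (xyExp 2 0) + q.coeff (xyExp 3 0) = 1 ∧
    q.coeff (xyExp 0 0) + q.coeff (xyExp 0 1) + q.coeff (xyExp 0 2) + q.coeff (xyExp 0 3) = 1 ∧
    2 * q.coeff (xyExp 2 0) + 3 * q.coeff (xyExp 3 0) + 2 * q.coeff (xyExp 0 2)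
      + 3 * q.coeff (xyExp 0 3)
      = 2 * q.coeff (xyExp 1 1) + q.coeff (xyExp 2 1) + q.coeff (xyExp 1 2) ∧
    q.coeff (xyExp 1 0) + q.coeff (xyExp 2 0) + q.coeff (xyExp 2 1)
      = q.coeff (xyExp 0 1) + q.coeff (xyExp 0 2) + q.coeff (xyExp 1 2) := by
  have hz : ∀ i j, 3 < i + j → q.coeff (xyExp i j) = 0 := fun i j h =>
    coeff_xyExp_eq_zero_of_totalDegree_lt (hq.trans_lt h)
  have hpt : ∀ x y : ℝ, x + y = 1 → _ := fun x y hxy =>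
    (eval_eq_sum_coeff_xyExp q (Nat.lt_succ_of_le hq) x y).symm.trans (he x y hxy)
  have h10 := hpt 1 0 (by norm_num)
  have h01 := hpt 0 1 (by norm_num)
  have h21 := hpt 2 (-1) (by norm_num)
  have h12 := hpt (-1) 2 (by norm_num)
  simp only [sum_range_succ, sum_range_zero, hz 1 3 (by norm_num), hz 2 2 (by norm_num),
    hz 2 3 (by norm_num), hz 3 1 (by norm_num), hz 3 2 (by norm_num), hz 3 3 (by norm_num)]
    at h10 h01 h21 h12
  norm_num at h10 h01 h21 h12
  exact ⟨by linarith, by linarith, by linarith, by linarith⟩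

lemma exists_coeff_xyExp_ne_zero_of_totalDegree_eq {R : Type*} [CommSemiring R]
    {q : MvPolynomial (Fin 2) R} {n : ℕ} (hq : q.totalDegree = n) (hn : n ≠ 0) :
    ∃ i j, i + j = n ∧ q.coeff (xyExp i j) ≠ 0 := by
  have hne : q.support.Nonempty := by
    rw [nonempty_iff_ne_empty, Ne, support_eq_empty]
    rintro rfl
    exact hn (hq ▸ totalDegree_zero)
  obtain ⟨m, hm, hmax⟩ := exists_mem_eq_sup _ hne fun s => s.sum fun _ e => e
  refine ⟨m 0, m 1, ?_, by rwa [xyExp_apply_zero_apply_one, ← mem_support_iff]⟩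
  rw [← hq, totalDegree, hmax, Finsupp.sum_fintype _ _ (fun _ => rfl), Fin.sum_univ_two]

lemma coeff_xyExp_cubic_sum_pos {q : MvPolynomial (Fin 2) ℝ} (hn : ∀ m, 0 ≤ q.coeff m)
    (hq : q.totalDegree = 3) :
    0 < q.coeff (xyExp 3 0) + q.coeff (xyExp 2 1) + q.coeff (xyExp 1 2) + q.coeff (xyExp 0 3) := by
  obtain ⟨i, j, hij, hc⟩ := exists_coeff_xyExp_ne_zero_of_totalDegree_eq hq three_ne_zero
  have hpos := (hn _).lt_of_ne' hc
  have := hn (xyExp 3 0); have := hn (xyExp 2 1); have := hn (xyExp 1 2); have := hn (xyExp 0 3)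
  obtain ⟨rfl, rfl⟩ | ⟨rfl, rfl⟩ | ⟨rfl, rfl⟩ | ⟨rfl, rfl⟩ :
      i = 3 ∧ j = 0 ∨ i = 2 ∧ j = 1 ∨ i = 1 ∧ j = 2 ∨ i = 0 ∧ j = 3 := by omega
  all_goals linarith

section Support

variable {σ R : Type*} [CommSemiring R] {q : MvPolynomial σ R}

lemma support_mem_image_support_of_coeff_add_add_ne_zero [DecidableEq σ] {s : Finset σ}
    {a b c : σ →₀ ℕ}
    (ha : a.support = s) (hb : b.support = s) (hc : c.support = s)
    (h : q.coeff a + q.coeff b + q.coeff c ≠ 0) : s ∈ q.support.image Finsupp.support := by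
  by_contra hs
  have hzero : ∀ m, m.support = s → q.coeff m = 0 := fun m hm =>
    notMem_support_iff.mp fun hmem => hs (mem_image.2 ⟨m, hmem, hm⟩)
  simp [hzero a ha, hzero b hb, hzero c hc] at h

lemma coeff_eq_zero_of_injOn_support
    (hinj : Set.InjOn Finsupp.support (q.support : Set (σ →₀ ℕ)))
    {m m' : σ →₀ ℕ} (hm : q.coeff m ≠ 0) (hne : m' ≠ m) (hsupp : m'.support = m.support) :
    q.coeff m' = 0 :=
  by_contra fun h => hne (hinj (mem_support_iff.2 h) (mem_support_iff.2 hm) hsupp)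

end Support

/-- Terms are sorted by the set of variables they involve: a three-term support meeting the three
classes `{x}`, `{y}`, `{x, y}` meets each of them once. -/
lemma injOn_support_of_card_support_eq_three {R : Type*} [CommSemiring R]
    {q : MvPolynomial (Fin 2) R} (hcard : #q.support = 3)
    (hx : q.coeff (xyExp 1 0) + q.coeff (xyExp 2 0) + q.coeff (xyExp 3 0) ≠ 0)
    (hy : q.coeff (xyExp 0 1) + q.coeff (xyExp 0 2) + q.coeff (xyExp 0 3) ≠ 0)
    (hxy : q.coeff (xyExp 1 1) + q.coeff (xyExp 2 1) + q.coeff (xyExp 1 2) ≠ 0) :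
    Set.InjOn Finsupp.support (q.support : Set (Fin 2 →₀ ℕ)) := by
  refine injOn_of_subset_image_of_card_le (t := {{0}, {1}, {0, 1}}) ?_ (by rw [hcard]; rfl)
  simp only [insert_subset_iff, singleton_subset_iff]
  exact ⟨support_mem_image_support_of_coeff_add_add_ne_zero (by simp) (by simp) (by simp) hx,
    support_mem_image_support_of_coeff_add_add_ne_zero (by simp) (by simp) (by simp) hy,
    support_mem_image_support_of_coeff_add_add_ne_zero (by simp) (by simp) (by simp) hxy⟩

lemma monomial_xyExp {R : Type*} [CommSemiring R] (i j : ℕ) (a : R) :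
    monomial (xyExp i j) a = C a * X 0 ^ i * X 1 ^ j := by
  rw [C_apply, X_pow_eq_monomial, X_pow_eq_monomial, monomial_mul, monomial_mul, xyExp, mul_one,
    mul_one, zero_add]

lemma p18_eq_sum_monomial :
    p18 = monomial (xyExp 3 0) 1 + monomial (xyExp 1 1) 3 + monomial (xyExp 0 3) 1 := by
  simp only [monomial_xyExp, p18, map_one, map_ofNat]
  ring

lemma support_p18 : p18.support = {xyExp 3 0, xyExp 1 1, xyExp 0 3} := by
  ext m
  simp only [p18_eq_sum_monomial, mem_support_iff, coeff_add, coeff_monomial, mem_insert,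
    mem_singleton]
  obtain rfl | h30 := eq_or_ne (xyExp 3 0) m
  · simp
  obtain rfl | h11 := eq_or_ne (xyExp 1 1) m
  · simp
  obtain rfl | h03 := eq_or_ne (xyExp 0 3) m
  · simp
  simp [h30, h11, h03, h30.symm, h11.symm, h03.symm]

lemma coeff_p18_nonneg (m : Fin 2 →₀ ℕ) : 0 ≤ p18.coeff m := by
  simp only [p18_eq_sum_monomial, coeff_add, coeff_monomial]
  split_ifs <;> norm_num

lemma totalDegree_p18 : p18.totalDegree = 3 := by
  simp [totalDegree, support_p18, Finsupp.sum_fintype]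

lemma eval_p18 {x y : ℝ} (hxy : x + y = 1) : eval ![x, y] p18 = 1 := by
  simp only [p18, map_add, map_mul, map_pow, eval_X, map_ofNat, Matrix.cons_val_zero,
    Matrix.cons_val_one]
  linear_combination ((x + y) ^ 2 + (x + y) + 1 - 3 * x * y) * hxy

lemma card_support_p18 : #p18.support = 3 := by
  rw [support_p18, card_insert_of_notMem (by simp), card_insert_of_notMem (by simp), card_singleton]

lemma eq_p18_of_support_eq {q : MvPolynomial (Fin 2) ℝ}
    (hS : q.support = p18.support) (h30 : q.coeff (xyExp 3 0) = 1)
    (h11 : q.coeff (xyExp 1 1) = 3) (h03 : q.coeff (xyExp 0 3) = 1) : q = p18 := by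
  rw [← support_sum_monomial_coeff q, hS, support_p18, sum_insert (by simp), sum_insert (by simp),
    sum_singleton, h30, h11, h03, p18_eq_sum_monomial, add_assoc]

theorem eq_p18_of_eval_eq_one (q : MvPolynomial (Fin 2) ℝ) (hn : ∀ m, 0 ≤ q.coeff m)
    (hcard : q.support.card = 3) (hdeg : q.totalDegree = 3)
    (he : ∀ x y : ℝ, x + y = 1 → eval ![x, y] q = 1) : q = p18 := by
  obtain ⟨hx, hy, hmix, hbal⟩ := coeff_relations_of_eval_eq_one hdeg.le he
  have hcubic := coeff_xyExp_cubic_sum_pos hn hdeg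
  have := hn (xyExp 0 0); have := hn (xyExp 1 0); have := hn (xyExp 2 0); have := hn (xyExp 3 0)
  have := hn (xyExp 0 1); have := hn (xyExp 0 2); have := hn (xyExp 0 3)
  have := hn (xyExp 1 1); have := hn (xyExp 2 1); have := hn (xyExp 1 2)
  have hmixed : 0 < q.coeff (xyExp 1 1) + q.coeff (xyExp 2 1) + q.coeff (xyExp 1 2) := by linarith
  have hinj := injOn_support_of_card_support_eq_three hcard (by linarith) (by linarith)
    hmixed.ne'
  obtain h11 | h21 | h12 : q.coeff (xyExp 1 1) ≠ 0 ∨ q.coeff (xyExp 2 1) ≠ 0 ∨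
      q.coeff (xyExp 1 2) ≠ 0 := by
    by_contra! h; linarith [h.1, h.2.1, h.2.2]
  · have z21 := coeff_eq_zero_of_injOn_support hinj h11 (m' := xyExp 2 1) (by simp) (by simp)
    have z12 := coeff_eq_zero_of_injOn_support hinj h11 (m' := xyExp 1 2) (by simp) (by simp)
    have h30 : 0 < q.coeff (xyExp 3 0) := by linarith
    have h03 : 0 < q.coeff (xyExp 0 3) := by linarith
    have hS : q.support = p18.support := by
      refine (eq_of_subset_of_card_le ?_ (by rw [hcard, card_support_p18])).symm
      simp [support_p18, insert_subset_iff, h11, h30.ne', h03.ne']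
    have hz : ∀ i j, xyExp i j ∉ p18.support → q.coeff (xyExp i j) = 0 := fun _ _ h =>
      notMem_support_iff.mp (hS ▸ h)
    have := hz 0 0 (by simp [support_p18]); have := hz 1 0 (by simp [support_p18])
    have := hz 2 0 (by simp [support_p18]); have := hz 0 1 (by simp [support_p18])
    have := hz 0 2 (by simp [support_p18])
    exact eq_p18_of_support_eq hS (by linarith) (by linarith) (by linarith)
  · have := coeff_eq_zero_of_injOn_support hinj h21 (m' := xyExp 1 1) (by simp) (by simp)
    have := coeff_eq_zero_of_injOn_support hinj h21 (m' := xyExp 1 2) (by simp) (by simp)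
    have := (hn _).lt_of_ne' h21
    linarith
  · have := coeff_eq_zero_of_injOn_support hinj h12 (m' := xyExp 1 1) (by simp) (by simp)
    have := coeff_eq_zero_of_injOn_support hinj h12 (m' := xyExp 2 1) (by simp) (by simp)
    have := (hn _).lt_of_ne' h12
    linarith

theorem stmt_18 :
    (∀ x y : ℝ, x + y = 1 → eval ![x, y] p18 = 1) ∧
    (∀ m, 0 ≤ p18.coeff m) ∧
    p18.support.card = 3 ∧ p18.totalDegree = 3 ∧ (3 : ℕ) = 2 * 3 - 3 ∧
    (∀ q : MvPolynomial (Fin 2) ℝ,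
      (∀ m, 0 ≤ q.coeff m) → q.support.card = 3 → q.totalDegree = 3 →
      (∀ x y : ℝ, x + y = 1 → eval ![x, y] q = 1) → q = p18) :=
  ⟨fun _ _ => eval_p18, coeff_p18_nonneg, card_support_p18, totalDegree_p18, rfl,
    eq_p18_of_eval_eq_one⟩
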